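/- Let w_1,...,w_N > 0 be weights and B ≤ N. In sequential weighted sampling without replacement (at each step, select an unselected index i with probability w_i divided by the sum of weights of unselected indices), the probability that a fixed index i is among the B selected indices is at least the probability that i is selected when it has the minimum weight, and in particular is at least B·w_min/(N·w_max) > 0, where w_min = min_j w_j and w_max = max_j w_j. -/

import Mathlib

open Finset

/-- Probability of drawing the ordered sample σ : Fin B ↪ Fin n under sequential weighted
sampling without replacement (Plackett–Luce): at each step an unselected index is drawn
with probability its weight over the total weight of unselected indices. -/
noncomputable def plSeqProb {n B : ℕ} (w : Fin n → ℝ) (σ : Fin B ↪ Fin n) : ℝ :=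
  ∏ k : Fin B,
    w (σ k) / ((∑ j, w j) - ∑ l ∈ Finset.univ.filter (fun l : Fin B => l < k), w (σ l))

/-- Inclusion probability of index i in a sequential weighted sample of size B. -/
noncomputable def plInclusionProb (n B : ℕ) (w : Fin n → ℝ) (i : Fin n) : ℝ :=
  ∑ σ : Fin B ↪ Fin n, if ∃ k, σ k = i then plSeqProb w σ else 0

/-!
Conditioning on the first draw, the probability `g B s i` that `i` is among `B` draws from the
pool `s` (`plInclusionOn`) satisfies `g (B+1) s i = (w i + C) / (w i + R)`, where
`R = ∑_{k ∈ s \ {i}} w k` and `C = ∑_{k ∈ s \ {i}} w k * g B (s \ {k}) i ≤ R`.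

Monotonicity: lowering `w i` to `c` leaves `R` unchanged and, by induction, does not increase `C`;
and `x ↦ (x + C) / (x + R)` is increasing because `C ≤ R`.

Lower bound: if all weights in `s` lie in `[a, b]`, then `g B s i ≥ B a / (#s b)`. With `y` this
bound for pools of size `#s - 1` and `W = w i + R`, the recursion gives
`g (B+1) s i ≥ y + (w i / W) (1 - y)`, and `w i / W ≥ a / (#s b)` since `W ≤ #s b`.
-/

lemma sum_fun_fin_succ {α M : Type*} [Fintype α] [AddCommMonoid M] {B : ℕ}
    (F : (Fin (B + 1) → α) → M) :
    ∑ g, F g = ∑ j, ∑ g : Fin B → α, F (Fin.cons j g) := by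
  rw [← Fintype.sum_prod_type']
  exact (Fintype.sum_equiv (Fin.consEquiv fun _ => α) _ _ fun _ => rfl).symm

variable {α : Type*} [DecidableEq α]

noncomputable def plInclusionOn (w : α → ℝ) : ℕ → Finset α → α → ℝ
  | 0, _, _ => 0
  | B + 1, s, i =>
      (w i + ∑ k ∈ s.erase i, w k * plInclusionOn w B (s.erase k) i) / ∑ j ∈ s, w j

section Recursion

variable {w : α → ℝ} {i : α}

lemma plInclusionOn_le_one (hw : ∀ j, 0 ≤ w j) :
    ∀ (B : ℕ) {s : Finset α}, i ∈ s → plInclusionOn w B s i ≤ 1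
  | 0, _, _ => zero_le_one
  | B + 1, s, hi => by
    refine div_le_one_of_le₀ ?_ (sum_nonneg fun j _ => hw j)
    rw [← add_sum_erase s w hi]
    gcongr with k hk
    exact mul_le_of_le_one_right (hw k)
      (plInclusionOn_le_one hw B (mem_erase_of_ne_of_mem (ne_of_mem_erase hk).symm hi))

lemma plInclusionOn_update_le (hw : ∀ j, 0 < w j) {c : ℝ} (hc : 0 < c) (hcw : c ≤ w i) :
    ∀ (B : ℕ) {s : Finset α}, i ∈ s →
      plInclusionOn (Function.update w i c) B s i ≤ plInclusionOn w B s i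
  | 0, _, _ => le_rfl
  | B + 1, s, hi => by
    set v := Function.update w i c
    have hvi : v i = c := Function.update_self ..
    have hvw : ∀ k ∈ s.erase i, v k = w k := fun k hk =>
      Function.update_of_ne (ne_of_mem_erase hk) _ _
    set R := ∑ k ∈ s.erase i, w k
    set C := ∑ k ∈ s.erase i, w k * plInclusionOn w B (s.erase k) i
    have hR : 0 ≤ R := sum_nonneg fun k _ => (hw k).le
    have hCR : C ≤ R := sum_le_sum fun k hk => mul_le_of_le_one_right (hw k).le
      (plInclusionOn_le_one (fun j => (hw j).le) B
        (mem_erase_of_ne_of_mem (ne_of_mem_erase hk).symm hi))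
    have hCv : ∑ k ∈ s.erase i, v k * plInclusionOn v B (s.erase k) i ≤ C :=
      sum_le_sum fun k hk => by
        rw [hvw k hk]
        exact mul_le_mul_of_nonneg_left (plInclusionOn_update_le hw hc hcw B
          (mem_erase_of_ne_of_mem (ne_of_mem_erase hk).symm hi)) (hw k).le
    have hsv : ∑ j ∈ s, v j = c + R := by rw [← add_sum_erase s v hi, sum_congr rfl hvw, hvi]
    have hsw : ∑ j ∈ s, w j = w i + R := (add_sum_erase s w hi).symm
    simp only [plInclusionOn]
    rw [hsv, hsw, hvi]
    calc (c + ∑ k ∈ s.erase i, v k * plInclusionOn v B (s.erase k) i) / (c + R)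
        ≤ (c + C) / (c + R) := by gcongr
      _ ≤ (w i + C) / (w i + R) := by
        rw [div_le_div_iff₀ (by linarith) (by linarith [hw i])]
        nlinarith [mul_nonneg (sub_nonneg.2 hcw) (sub_nonneg.2 hCR)]

lemma le_plInclusionOn_succ {B : ℕ} {s : Finset α} {y : ℝ} (hw : ∀ j ∈ s, 0 ≤ w j)
    (hi : i ∈ s) (hy : ∀ k ∈ s.erase i, y ≤ plInclusionOn w B (s.erase k) i) :
    (w i + (∑ j ∈ s, w j - w i) * y) / ∑ j ∈ s, w j ≤ plInclusionOn w (B + 1) s i := by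
  rw [plInclusionOn, ← sum_erase_eq_sub hi, sum_mul]
  gcongr with k hk
  · exact sum_nonneg hw
  · exact hw k (mem_of_mem_erase hk)
  · exact hy k hk

lemma div_le_plInclusionOn {a b : ℝ} (ha : 0 < a) (B : ℕ) {s : Finset α}
    (hwa : ∀ j ∈ s, a ≤ w j) (hwb : ∀ j ∈ s, w j ≤ b) (hi : i ∈ s) (hB : B ≤ #s) :
    B * a / (#s * b) ≤ plInclusionOn w B s i := by
  induction B generalizing s with
  | zero => simp [plInclusionOn]
  | succ B ih =>
    obtain ⟨m, hm⟩ : ∃ m, #s = m + 1 := Nat.exists_eq_add_one.2 (card_pos.2 ⟨i, hi⟩)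
    have hw : ∀ j ∈ s, 0 < w j := fun j hj => ha.trans_le (hwa j hj)
    have hab : a ≤ b := (hwa i hi).trans (hwb i hi)
    have hb : 0 < b := ha.trans_le hab
    set y : ℝ := B * a / (m * b)
    have hy : ∀ k ∈ s.erase i, y ≤ plInclusionOn w B (s.erase k) i := fun k hk => by
      have hks := mem_of_mem_erase hk
      have := ih (fun j hj => hwa j (mem_of_mem_erase hj)) (fun j hj => hwb j (mem_of_mem_erase hj))
        (mem_erase_of_ne_of_mem (ne_of_mem_erase hk).symm hi)
        (by rw [card_erase_of_mem hks]; omega)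
      rwa [card_erase_of_mem hks, hm, Nat.add_sub_cancel] at this
    have hBm : (B : ℝ) ≤ m := by exact_mod_cast (show B ≤ m by omega)
    have hy0 : 0 ≤ y := by positivity
    have hy1 : y ≤ 1 := div_le_one_of_le₀ (mul_le_mul hBm hab ha.le (Nat.cast_nonneg m))
      (by positivity)
    -- for `m = 0` both sides vanish: `B = 0`, and `y = 0` by the convention `x / 0 = 0`
    have hym : y * (m * b) = B * a := by
      rcases Nat.eq_zero_or_pos m with rfl | hm0
      · obtain rfl : B = 0 := by omega
        simp [y]
      · exact div_mul_cancel₀ _ (by positivity)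
    set W := ∑ j ∈ s, w j
    have hW : 0 < W := sum_pos hw ⟨i, hi⟩
    have hWb : W ≤ (m + 1) * b := by
      have := sum_le_card_nsmul s w b hwb
      rw [hm, nsmul_eq_mul] at this
      exact_mod_cast this
    have hfirst : a * (1 - y) * W ≤ w i * (1 - y) * ((m + 1) * b) :=
      mul_le_mul (mul_le_mul_of_nonneg_right (hwa i hi) (by linarith)) hWb hW.le
        (mul_nonneg (hw i hi).le (by linarith))
    refine le_trans ?_ (le_plInclusionOn_succ (fun j hj => (hw j hj).le) hi hy)
    rw [hm, div_le_div_iff₀ (by positivity) hW]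
    push_cast
    linear_combination hfirst - W * hym + mul_nonneg (mul_nonneg hW.le hy0) (sub_nonneg.2 hab)

end Recursion

noncomputable def plSeqProbOn (w : α → ℝ) (s : Finset α) {B : ℕ} (g : Fin B → α) : ℝ :=
  ∏ k : Fin B,
    w (g k) / ((∑ j ∈ s, w j) - ∑ l ∈ univ.filter (fun l : Fin B => l < k), w (g l))

lemma plSeqProbOn_cons (w : α → ℝ) {s : Finset α} {j : α} (hj : j ∈ s) {B : ℕ}
    (g : Fin B → α) :
    plSeqProbOn w s (Fin.cons j g : Fin (B + 1) → α)
      = w j / (∑ x ∈ s, w x) * plSeqProbOn w (s.erase j) g := by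
  simp only [plSeqProbOn, Fin.prod_univ_succ, Fin.cons_zero, Fin.cons_succ, sum_erase_eq_sub hj,
    sum_filter, Fin.sum_univ_succ, Fin.succ_lt_succ_iff, Fin.not_lt_zero, Fin.succ_pos]
  simp [sub_sub]

lemma cons_injective_and_mem_iff {s : Finset α} {j : α} {B : ℕ} {g : Fin B → α} :
    (Function.Injective (Fin.cons j g : Fin (B + 1) → α) ∧
        ∀ k, (Fin.cons j g : Fin (B + 1) → α) k ∈ s)
      ↔ j ∈ s ∧ Function.Injective g ∧ ∀ k, g k ∈ s.erase j := by
  simp only [Fin.cons_injective_iff, Fin.forall_fin_succ, Fin.cons_zero, Fin.cons_succ, mem_erase,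
    Set.mem_range, not_exists, forall_and]
  tauto

section Expectation

variable [Fintype α]

noncomputable def plExpectOn (w : α → ℝ) (B : ℕ) (s : Finset α) (f : (Fin B → α) → ℝ) : ℝ :=
  ∑ g : Fin B → α,
    if Function.Injective g ∧ ∀ k, g k ∈ s then plSeqProbOn w s g * f g else 0

lemma plExpectOn_succ (w : α → ℝ) {B : ℕ} (s : Finset α) (f : (Fin (B + 1) → α) → ℝ) :
    plExpectOn w (B + 1) s f
      = ∑ j ∈ s,
          w j / (∑ x ∈ s, w x) * plExpectOn w B (s.erase j) (fun g => f (Fin.cons j g)) := by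
  rw [plExpectOn, sum_fun_fin_succ, ← sum_subset (subset_univ s)]
  · refine sum_congr rfl fun j hj => ?_
    simp only [plExpectOn, mul_sum, mul_ite, mul_zero]
    refine sum_congr rfl fun g _ => ?_
    simp only [cons_injective_and_mem_iff, hj, true_and, plSeqProbOn_cons w hj, mul_assoc]
  · intro j _ hj
    refine sum_eq_zero fun g _ => if_neg ?_
    rw [cons_injective_and_mem_iff]
    exact fun h => hj h.1

lemma plExpectOn_const (w : α → ℝ) (hw : ∀ j, 0 < w j) (c : ℝ) :
    ∀ (B : ℕ) {s : Finset α}, B ≤ #s → plExpectOn w B s (fun _ => c) = c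
  | 0, _, _ => by simp [plExpectOn, plSeqProbOn, Function.injective_of_subsingleton]
  | B + 1, s, hB => by
    have hW : (∑ x ∈ s, w x) ≠ 0 := (sum_pos (fun j _ => hw j) (card_pos.1 (by omega))).ne'
    rw [plExpectOn_succ]
    calc ∑ j ∈ s, w j / (∑ x ∈ s, w x) * plExpectOn w B (s.erase j) (fun _ => c)
        = ∑ j ∈ s, w j / (∑ x ∈ s, w x) * c := sum_congr rfl fun j hj => by
          rw [plExpectOn_const w hw c B (by rw [card_erase_of_mem hj]; omega)]
      _ = c := by rw [← sum_mul, ← sum_div, div_self hW, one_mul]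

lemma plExpectOn_mem_eq_plInclusionOn {w : α → ℝ} (hw : ∀ j, 0 < w j) {i : α} :
    ∀ (B : ℕ) {s : Finset α}, i ∈ s → B ≤ #s →
      plExpectOn w B s (fun g => if ∃ k, g k = i then 1 else 0) = plInclusionOn w B s i
  | 0, _, _, _ => by simp [plExpectOn, plInclusionOn]
  | B + 1, s, hi, hB => by
    rw [plExpectOn_succ, plInclusionOn, ← add_sum_erase s _ hi]
    simp only [Fin.exists_fin_succ, Fin.cons_zero, Fin.cons_succ, true_or, if_true]
    rw [plExpectOn_const w hw 1 B (by rw [card_erase_of_mem hi]; omega), add_div, sum_div, mul_one]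
    congr 1
    refine sum_congr rfl fun k hk => ?_
    simp only [ne_of_mem_erase hk, false_or]
    rw [plExpectOn_mem_eq_plInclusionOn hw B (mem_erase_of_ne_of_mem (ne_of_mem_erase hk).symm hi)
      (by rw [card_erase_of_mem (mem_of_mem_erase hk)]; omega)]
    ring

end Expectation

lemma plInclusionProb_eq_plExpectOn {n B : ℕ} (w : Fin n → ℝ) (i : Fin n) :
    plInclusionProb n B w i = plExpectOn w B univ (fun g => if ∃ k, g k = i then 1 else 0) := by
  simp only [plInclusionProb, plExpectOn, mem_univ, implies_true, and_true, mul_ite, mul_one,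
    mul_zero]
  rw [eq_comm, ← sum_filter, sum_subtype _ fun g => mem_filter_univ (p := Function.Injective) g]
  exact Fintype.sum_equiv (Equiv.subtypeInjectiveEquivEmbedding (Fin B) (Fin n)) _ _ fun _ => rfl

lemma plInclusionProb_eq_plInclusionOn {n B : ℕ} {w : Fin n → ℝ} (hw : ∀ j, 0 < w j)
    (hB : B ≤ n) (i : Fin n) : plInclusionProb n B w i = plInclusionOn w B univ i := by
  rw [plInclusionProb_eq_plExpectOn, plExpectOn_mem_eq_plInclusionOn hw B (mem_univ i)
    (by rwa [card_univ, Fintype.card_fin])]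

/-- In Plackett–Luce sampling without replacement with positive weights and budget B ≤ N,
each index's inclusion probability is monotone in its own weight (it is at least the
inclusion probability when the index is given the minimum weight), and in particular it is
at least B·w_min/(N·w_max) > 0. -/
theorem stmt_19 (N B : ℕ) (hB : 1 ≤ B) (hBN : B ≤ N)
    (w : Fin N → ℝ) (hw : ∀ j, 0 < w j) (i : Fin N)
    (wmin wmax : ℝ)
    (hmin : wmin = Finset.univ.inf' (Finset.univ_nonempty_iff.mpr
      ⟨i⟩) w)
    (hmax : wmax = Finset.univ.sup' (Finset.univ_nonempty_iff.mpr
      ⟨i⟩) w) :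
    plInclusionProb N B (Function.update w i wmin) i ≤ plInclusionProb N B w i ∧
    (B : ℝ) * wmin / (N * wmax) ≤ plInclusionProb N B w i ∧
    0 < (B : ℝ) * wmin / (N * wmax) := by
  have hmin_le : ∀ j, wmin ≤ w j := fun j => hmin ▸ inf'_le w (mem_univ j)
  have hle_max : ∀ j, w j ≤ wmax := fun j => hmax ▸ le_sup' w (mem_univ j)
  have hmin_pos : 0 < wmin := hmin ▸ (lt_inf'_iff _).2 fun j _ => hw j
  have hupdate : ∀ j, 0 < Function.update w i wmin j :=
    (Function.forall_update_iff w fun _ x => 0 < x).2 ⟨hmin_pos, fun j _ => hw j⟩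
  rw [plInclusionProb_eq_plInclusionOn hupdate hBN, plInclusionProb_eq_plInclusionOn hw hBN]
  refine ⟨plInclusionOn_update_le hw hmin_pos (hmin_le i) B (mem_univ i), ?_, ?_⟩
  · simpa using div_le_plInclusionOn hmin_pos B (fun j _ => hmin_le j) (fun j _ => hle_max j)
      (mem_univ i) (by simpa using hBN)
  · have hB' : (0 : ℝ) < B := by exact_mod_cast hB
    have hN : (0 : ℝ) < N := by exact_mod_cast hB.trans hBN
    have hmax_pos : 0 < wmax := hmin_pos.trans_le ((hmin_le i).trans (hle_max i))
    positivity
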